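/- Let (X,d) be a metric space, x ≠ y two points of X, and x₀ ∈ X. Then in Con(X): (i) the Hausdorff distance between the images of the rays γ_x and γ_y is infinite, and (ii) the Hausdorff distance between the images of γ_x and γ_{∞,x₀} is infinite. Hence the map x ↦ [γ_x] from X to the boundary at infinity of Con(X) is well-defined and injective, and no [γ_x] equals the vertical direction [γ_{∞,x₀}]. -/

import Mathlib

/-!
Since `max t t' ≤ d(x, x') + max t t'`, the cone distance between `(x, t)` and `(x', t')`
dominates both `|log t - log t'|` and, for `x ≠ x'`, `2 log d(x, x') - log t - log t'`.
Along `γ_x` the height `e^{-s}` tends to `0`, so both bounds force the point `γ_x(s)` to be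
arbitrarily far from every point of `γ_y` and of `γ_{∞,x₀}`.
-/

/-- The Bonk–Schramm cone distance on `X × (0,∞)`. -/
noncomputable def dCon {X : Type*} [MetricSpace X] (p q : X × ℝ) : ℝ :=
  2 * Real.log ((dist p.1 q.1 + max p.2 q.2) / Real.sqrt (p.2 * q.2))

/-- Two subsets of `Con(X)` are at Hausdorff distance at most `R` with respect to `d_Con`. -/
def HausCloseCon {X : Type*} [MetricSpace X] (A B : Set (X × ℝ)) (R : ℝ) : Prop :=
  (∀ p ∈ A, ∃ q ∈ B, dCon p q ≤ R) ∧ (∀ q ∈ B, ∃ p ∈ A, dCon p q ≤ R)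

open Real Set

section Cone

variable {X : Type*} [MetricSpace X] {p q : X × ℝ}

lemma dist_add_max_pos (hp : 0 < p.2) (q : X × ℝ) : 0 < dist p.1 q.1 + max p.2 q.2 :=
  add_pos_of_nonneg_of_pos dist_nonneg (lt_max_of_lt_left hp)

lemma dCon_eq (hp : 0 < p.2) (hq : 0 < q.2) :
    dCon p q = 2 * log (dist p.1 q.1 + max p.2 q.2) - log p.2 - log q.2 := by
  rw [dCon, log_div (dist_add_max_pos hp q).ne' (sqrt_pos.2 (mul_pos hp hq)).ne',
    log_sqrt (mul_pos hp hq).le, log_mul hp.ne' hq.ne']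
  ring

lemma log_max_le_log_dist_add_max (hp : 0 < p.2) (q : X × ℝ) :
    log (max p.2 q.2) ≤ log (dist p.1 q.1 + max p.2 q.2) :=
  log_le_log (lt_max_of_lt_left hp) (le_add_of_nonneg_left dist_nonneg)

lemma abs_log_sub_log_le_dCon (hp : 0 < p.2) (hq : 0 < q.2) :
    |log p.2 - log q.2| ≤ dCon p q := by
  have hmax := log_max_le_log_dist_add_max hp q
  have hpmax : log p.2 ≤ log (max p.2 q.2) := log_le_log hp (le_max_left _ _)
  have hqmax : log q.2 ≤ log (max p.2 q.2) := log_le_log hq (le_max_right _ _)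
  rw [dCon_eq hp hq, abs_sub_le_iff]
  constructor <;> linarith

lemma two_mul_log_dist_sub_le_dCon (hpq : p.1 ≠ q.1) (hp : 0 < p.2) (hq : 0 < q.2) :
    2 * log (dist p.1 q.1) - log p.2 - log q.2 ≤ dCon p q := by
  have hdist : log (dist p.1 q.1) ≤ log (dist p.1 q.1 + max p.2 q.2) :=
    log_le_log (dist_pos.2 hpq) (le_add_of_nonneg_right (lt_max_of_lt_left hp).le)
  rw [dCon_eq hp hq]
  linarith

lemma not_hausCloseCon_of_forall_exists_lt {A B : Set (X × ℝ)}
    (h : ∀ R, ∃ p ∈ A, ∀ q ∈ B, R < dCon p q) (R : ℝ) : ¬ HausCloseCon A B R := by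
  rintro ⟨hAB, -⟩
  obtain ⟨p, hp, hlt⟩ := h R
  obtain ⟨q, hq, hle⟩ := hAB p hp
  exact (hlt q hq).not_ge hle

lemma exists_gamma_lt_dCon_gamma (x y : X) (hxy : x ≠ y) (R : ℝ) :
    ∃ p ∈ (fun s : ℝ => (x, exp (-s))) '' Ici 0,
      ∀ q ∈ (fun s : ℝ => (y, exp (-s))) '' Ici 0, R < dCon p q := by
  obtain ⟨s, hs, hRs⟩ : ∃ s : ℝ, 0 ≤ s ∧ R - 2 * log (dist x y) < s :=
    ⟨max 0 (R - 2 * log (dist x y)) + 1, by positivity,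
      by linarith [le_max_right 0 (R - 2 * log (dist x y))]⟩
  refine ⟨_, ⟨s, hs, rfl⟩, ?_⟩
  rintro _ ⟨t, ht, rfl⟩
  have hbound := two_mul_log_dist_sub_le_dCon (p := (x, exp (-s))) (q := (y, exp (-t))) hxy
    (exp_pos _) (exp_pos _)
  simp only [log_exp] at hbound
  have : (0 : ℝ) ≤ t := ht
  linarith

lemma exists_gamma_lt_dCon_gammaInfty (x x₀ : X) (R : ℝ) :
    ∃ p ∈ (fun s : ℝ => (x, exp (-s))) '' Ici 0,
      ∀ q ∈ (fun s : ℝ => (x₀, exp s)) '' Ici 0, R < dCon p q := by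
  obtain ⟨s, hs, hRs⟩ : ∃ s : ℝ, 0 ≤ s ∧ R < s :=
    ⟨max 0 R + 1, by positivity, by linarith [le_max_right 0 R]⟩
  refine ⟨_, ⟨s, hs, rfl⟩, ?_⟩
  rintro _ ⟨t, ht, rfl⟩
  have hbound := abs_log_sub_log_le_dCon (p := (x, exp (-s))) (q := (x₀, exp t))
    (exp_pos _) (exp_pos _)
  simp only [log_exp] at hbound
  have : (0 : ℝ) ≤ t := ht
  linarith [neg_le_abs (-s - t)]

end Cone

/-- For `x ≠ y` in `X` and any `x₀ ∈ X`: (i) the images of the rays `γ_x` and `γ_y` in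
`Con(X)` are at infinite Hausdorff distance, and (ii) the images of `γ_x` and `γ_{∞,x₀}`
are at infinite Hausdorff distance. Hence `x ↦ [γ_x]` is well-defined and injective into
the boundary at infinity, and no `[γ_x]` equals the vertical direction. -/
theorem stmt_8 {X : Type*} [MetricSpace X] (x y x₀ : X) (hxy : x ≠ y) :
    (∀ R : ℝ, ¬ HausCloseCon ((fun s : ℝ => (x, Real.exp (-s))) '' Set.Ici 0)
        ((fun s : ℝ => (y, Real.exp (-s))) '' Set.Ici 0) R) ∧
    (∀ R : ℝ, ¬ HausCloseCon ((fun s : ℝ => (x, Real.exp (-s))) '' Set.Ici 0)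
        ((fun s : ℝ => (x₀, Real.exp s)) '' Set.Ici 0) R) :=
  ⟨not_hausCloseCon_of_forall_exists_lt (exists_gamma_lt_dCon_gamma x y hxy),
    not_hausCloseCon_of_forall_exists_lt (exists_gamma_lt_dCon_gammaInfty x x₀)⟩
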